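/- Let θ, θ^W > 0, ρ^W > 0, u, u^W ∈ ℝ³ with u₂ = u₂^W, and let e₂ = (0,1,0). Then the e₂-moment of the incoming half-Maxwellian satisfies p_{e₂} = C_{θ,e₂} ∫_{{v ∈ ℝ³ : v₂ < 0}} ρ^W (2π θ^W)^{−3/2} exp(−|√θ v + u − u^W|²/(2θ^W)) H_{θ,e₂}(v) e^{|v|²/2} dv = −ρ^W √(θ^W/(2π)). -/

import Mathlib

open MeasureTheory Real

/-- Probabilists' Hermite polynomial `He n x`, with the convention `He n ≡ 0` for `n < 0`. -/
noncomputable def He (n : ℤ) (x : ℝ) : ℝ :=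
  if n < 0 then 0 else Polynomial.aeval x (Polynomial.hermite n.toNat)

/-- The Hermite basis function
`H_{θ,α}(v) = ∏_{d=1}^3 (2π)^{−1/2} θ^{−(α_d+1)/2} He_{α_d}(v_d) e^{−v_d²/2}`. -/
noncomputable def Hb (θ : ℝ) (α : Fin 3 → ℕ) (v : Fin 3 → ℝ) : ℝ :=
  ∏ d, (2 * Real.pi) ^ (-(1 / 2 : ℝ)) * θ ^ (-(((α d : ℝ) + 1) / 2)) *
    He (α d) (v d) * Real.exp (-(v d) ^ 2 / 2)

/-- `C_{θ,α} = (2π)^{3/2} θ^{|α|+3}/(α₁! α₂! α₃!)`. -/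
noncomputable def Cc (θ : ℝ) (α : Fin 3 → ℕ) : ℝ :=
  (2 * Real.pi) ^ ((3 : ℝ) / 2) * θ ^ (α 0 + α 1 + α 2 + 3) /
    ((Nat.factorial (α 0)) * (Nat.factorial (α 1)) * (Nat.factorial (α 2)))


/-!
After the factor `e^{|v|²/2}` cancels the Gaussian weight of `H_{θ,e₂}`, the integrand is
`ρ^W (2πθ^W)^{-3/2}` times a product of one-dimensional functions of `v₁, v₂, v₃`, and the
half-space `{v₂ < 0}` is a product set, so Fubini splits the integral. The `v₁`- and
`v₃`-factors are shifted Gaussians, each integrating to `√θ^W / θ`. Because `u₂ = u₂^W` the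
`v₂`-Gaussian is centred, so its factor is the half-line moment
`∫_{-∞}^0 x e^{-b x²} dx = -1/(2b)` with `b = θ / (2θ^W)`.
-/

theorem integral_Ioi_mul_exp_neg_mul_sq {b : ℝ} (hb : 0 < b) :
    ∫ x in Set.Ioi 0, x * exp (-b * x ^ 2) = (2 * b)⁻¹ := by
  rw [← Complex.ofReal_inj, Complex.ofReal_inv, Complex.ofReal_mul, Complex.ofReal_ofNat,
    ← integral_mul_cexp_neg_mul_sq (by simpa using hb)]
  refine integral_ofReal.symm.trans (integral_congr_ae (ae_of_all _ fun x => ?_))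
  simp [Complex.ofReal_exp]

theorem integral_Iio_mul_exp_neg_mul_sq {b : ℝ} (hb : 0 < b) :
    ∫ x in Set.Iio 0, x * exp (-b * x ^ 2) = -(2 * b)⁻¹ := by
  rw [setIntegral_congr_set Iio_ae_eq_Iic, ← neg_zero, ← integral_comp_neg_Ioi,
    ← integral_Ioi_mul_exp_neg_mul_sq hb, ← integral_neg]
  simp

theorem integral_exp_neg_mul_sq_add (b c : ℝ) : ∫ x, exp (-b * (x + c) ^ 2) = √(π / b) := by
  rw [integral_add_right_eq_self (fun x => exp (-b * x ^ 2)), integral_gaussian]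

theorem setIntegral_univ_pi_prod_eq_prod {ι 𝕜 : Type*} [Fintype ι] [RCLike 𝕜] {E : ι → Type*}
    {mE : ∀ i, MeasurableSpace (E i)} {μ : (i : ι) → Measure (E i)} [∀ i, SigmaFinite (μ i)]
    (s : (i : ι) → Set (E i)) (f : (i : ι) → E i → 𝕜) :
    ∫ x in Set.univ.pi s, ∏ i, f i (x i) ∂Measure.pi μ = ∏ i, ∫ y in s i, f i y ∂μ i := by
  rw [Measure.restrict_pi_pi, integral_fintype_prod_eq_prod]

theorem exp_neg_sum_sq_div {ι : Type*} [Fintype ι] (y : ι → ℝ) (c : ℝ) :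
    exp (-(∑ i, y i ^ 2) / c) = ∏ i, exp (-y i ^ 2 / c) := by
  rw [← exp_sum, ← Finset.sum_div, Finset.sum_neg_distrib]

theorem mul_add_sq_eq_sq_mul_add_div_sq {a : ℝ} (ha : a ≠ 0) (x w : ℝ) :
    (a * x + w) ^ 2 = a ^ 2 * (x + w / a) ^ 2 := by
  rw [← mul_pow, mul_add, mul_div_cancel₀ w ha]

theorem He_zero (x : ℝ) : He 0 x = 1 := by simp [He]

theorem He_one (x : ℝ) : He 1 x = x := by simp [He]

theorem Hb_mul_exp_half_sum_sq (θ : ℝ) (α : Fin 3 → ℕ) (v : Fin 3 → ℝ) :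
    Hb θ α v * exp ((∑ d, v d ^ 2) / 2) =
      ∏ d, (2 * π) ^ (-(1 / 2 : ℝ)) * θ ^ (-(((α d : ℝ) + 1) / 2)) * He (α d) (v d) := by
  rw [Hb, Finset.sum_div, exp_sum, ← Finset.prod_mul_distrib]
  refine Finset.prod_congr rfl fun d _ => ?_
  rw [mul_assoc, ← exp_add, neg_div, neg_add_cancel, exp_zero, mul_one]

/-- The `d`-th coordinate factor of the integrand of `p_α`, at `x = v_d`, `w = u_d - u^W_d`. -/
noncomputable def maxwellHermiteFactor (θ θW : ℝ) (n : ℕ) (w x : ℝ) : ℝ :=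
  (2 * π) ^ (-(1 / 2 : ℝ)) * θ ^ (-(((n : ℝ) + 1) / 2)) * He n x *
    exp (-(θ / (2 * θW)) * (x + w / √θ) ^ 2)

theorem exp_mul_Hb_mul_exp_eq_prod_maxwellHermiteFactor {θ : ℝ} (hθ : 0 < θ) (θW : ℝ)
    (α : Fin 3 → ℕ) (u uW v : Fin 3 → ℝ) :
    exp (-(∑ d, (√θ * v d + u d - uW d) ^ 2) / (2 * θW)) *
        (Hb θ α v * exp ((∑ d, v d ^ 2) / 2)) =
      ∏ d, maxwellHermiteFactor θ θW (α d) (u d - uW d) (v d) := by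
  rw [Hb_mul_exp_half_sum_sq, exp_neg_sum_sq_div, mul_comm, ← Finset.prod_mul_distrib]
  refine Finset.prod_congr rfl fun d _ => ?_
  rw [maxwellHermiteFactor, add_sub_assoc, mul_add_sq_eq_sq_mul_add_div_sq (sqrt_ne_zero'.2 hθ),
    sq_sqrt hθ.le, neg_div, mul_div_right_comm, ← neg_mul]

theorem integral_maxwellHermiteFactor_zero {θ θW : ℝ} (hθ : 0 < θ) (hθW : 0 < θW) (w : ℝ) :
    ∫ x, maxwellHermiteFactor θ θW 0 w x = √θW / θ := by
  simp only [maxwellHermiteFactor, Nat.cast_zero, He_zero, zero_add, mul_one]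
  have hvar : π / (θ / (2 * θW)) = 2 * π * θW / θ := by field_simp
  rw [integral_const_mul, integral_exp_neg_mul_sq_add, hvar, sqrt_div' _ hθ.le,
    sqrt_mul' _ hθW.le, rpow_neg (by positivity), rpow_neg hθ.le, ← sqrt_eq_rpow, ← sqrt_eq_rpow]
  have := (sqrt_pos.2 hθ).ne'
  field_simp
  rw [sq_sqrt hθ.le]

theorem setIntegral_Iio_maxwellHermiteFactor_one {θ θW : ℝ} (hθ : 0 < θ) (hθW : 0 < θW) :
    ∫ x in Set.Iio 0, maxwellHermiteFactor θ θW 1 0 x = -θW / (θ ^ 2 * √(2 * π)) := by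
  simp only [maxwellHermiteFactor, Nat.cast_one, He_one, zero_div, add_zero, mul_assoc]
  rw [integral_const_mul, integral_const_mul, integral_Iio_mul_exp_neg_mul_sq (by positivity),
    rpow_neg (by positivity), ← sqrt_eq_rpow]
  norm_num [rpow_neg_one]
  field_simp

theorem halfMaxwellian_e2_moment_general (θ θW ρW : ℝ) (hθ : 0 < θ) (hθW : 0 < θW)
    (u uW : Fin 3 → ℝ) (hu : u 1 = uW 1) :
    Cc θ (fun d => if d = 1 then 1 else 0) *
      (∫ v in {v : Fin 3 → ℝ | v 1 < 0},
        ρW * (2 * Real.pi * θW) ^ (-(3 : ℝ) / 2) *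
          Real.exp (-(∑ d, (Real.sqrt θ * v d + u d - uW d) ^ 2) / (2 * θW)) *
          Hb θ (fun d => if d = 1 then 1 else 0) v * Real.exp ((∑ d, (v d) ^ 2) / 2))
      = -ρW * Real.sqrt (θW / (2 * Real.pi)) := by
  set e : Fin 3 → ℕ := fun d => if d = 1 then 1 else 0
  have hCc : Cc θ e = (2 * π) ^ (3 / 2 : ℝ) * θ ^ 4 := by simp [Cc, e]
  have hS : {v : Fin 3 → ℝ | v 1 < 0} =
      Set.univ.pi (Function.update (fun _ => Set.univ) 1 (Set.Iio 0)) := by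
    rw [Set.univ_pi_update_univ]; rfl
  simp_rw [mul_assoc _ (Hb θ e _), mul_assoc (ρW * _) (exp _),
    exp_mul_Hb_mul_exp_eq_prod_maxwellHermiteFactor hθ]
  rw [integral_const_mul, hS, volume_pi, setIntegral_univ_pi_prod_eq_prod, Fin.prod_univ_three,
    Function.update_self, Function.update_of_ne (by decide), Function.update_of_ne (by decide),
    Measure.restrict_univ]
  simp only [e, Fin.isValue, Fin.reduceEq, ↓reduceIte, hu, sub_self]
  rw [integral_maxwellHermiteFactor_zero hθ hθW, integral_maxwellHermiteFactor_zero hθ hθW,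
    setIntegral_Iio_maxwellHermiteFactor_one hθ hθW, hCc, neg_div, rpow_neg (by positivity),
    mul_rpow two_pi_pos.le hθW.le, rpow_div_two_eq_sqrt 3 hθW.le, rpow_ofNat,
    sqrt_div' _ two_pi_pos.le]
  have : 0 < (2 * π) ^ (3 / 2 : ℝ) := by positivity
  have : √θW ≠ 0 := (sqrt_pos.2 hθW).ne'
  field_simp
  rw [sq_sqrt hθW.le]

/-- When `u₂ = u₂^W`, the `e₂`-moment of the incoming half-Maxwellian is
`p_{e₂} = −ρ^W √(θ^W/(2π))`. -/
theorem halfMaxwellian_e2_moment (θ θW ρW : ℝ) (hθ : 0 < θ) (hθW : 0 < θW)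
    (hρW : 0 < ρW) (u uW : Fin 3 → ℝ) (hu : u 1 = uW 1) :
    Cc θ (fun d => if d = 1 then 1 else 0) *
      (∫ v in {v : Fin 3 → ℝ | v 1 < 0},
        ρW * (2 * Real.pi * θW) ^ (-(3 : ℝ) / 2) *
          Real.exp (-(∑ d, (Real.sqrt θ * v d + u d - uW d) ^ 2) / (2 * θW)) *
          Hb θ (fun d => if d = 1 then 1 else 0) v * Real.exp ((∑ d, (v d) ^ 2) / 2))
      = -ρW * Real.sqrt (θW / (2 * Real.pi)) :=
  halfMaxwellian_e2_moment_general θ θW ρW hθ hθW u uW hu
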